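/- The second derivative with respect to ε at ε = 0 of μ_PE^A(r, ε) under the association alternative, given by -22r²/9 + 192/r - 96/r² - 96 for r ∈ [1, 4/3), -22r²/9 + 32/r² - 24 for r ∈ [4/3, 3/2), -6r² - 384/r + 248/r² + 144 for r ∈ [3/2, 2), and -40/r² for r ∈ [2, ∞), is strictly negative for all r ∈ [1, ∞). -/
import Mathlib


noncomputable def d2muAPE (r : ℝ) : ℝ :=
  if r < 4/3 then -22*r^2/9 + 192/r - 96/r^2 - 96
  else if r < 3/2 then -22*r^2/9 + 32/r^2 - 24
  else if r < 2 then -6*r^2 - 384/r + 248/r^2 + 144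
  else -40/r^2

theorem d2muAPE_neg : ∀ r : ℝ, 1 ≤ r → d2muAPE r < 0 := by
  intro r hr
  have hr0 : (0:ℝ) < r := lt_of_lt_of_le one_pos hr
  have hrne : r ≠ 0 := ne_of_gt hr0
  unfold d2muAPE
  split_ifs with h1 h2 h3
  · have heq : -22*r^2/9 + 192/r - 96/r^2 - 96
        = (-22*r^4 - 864*r^2 + 1728*r - 864)/(9*r^2) := by
      field_simp; ring
    rw [heq]
    apply div_neg_of_neg_of_pos
    · nlinarith [sq_nonneg (r - 1), pow_pos hr0 4]
    · positivity
  · have heq : -22*r^2/9 + 32/r^2 - 24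
        = (-22*r^4 - 216*r^2 + 288)/(9*r^2) := by
      field_simp; ring
    rw [heq]
    apply div_neg_of_neg_of_pos
    · have h43 : (4:ℝ)/3 ≤ r := le_of_not_gt h1
      nlinarith [pow_pos hr0 4, sq_nonneg (r - 4/3)]
    · positivity
  · have heq : -6*r^2 - 384/r + 248/r^2 + 144
        = (-6*r^4 + 144*r^2 - 384*r + 248)/(r^2) := by
      field_simp; ring
    rw [heq]
    apply div_neg_of_neg_of_pos
    · have h32 : (3:ℝ)/2 ≤ r := le_of_not_gt h2
      nlinarith [sq_nonneg (r - 2), mul_nonneg (sub_nonneg.2 h32) (sq_nonneg (r - 2)),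
        mul_nonneg (mul_nonneg (sub_nonneg.2 h32) (sub_nonneg.2 h32)) (sq_nonneg (r - 2))]
    · positivity
  · apply div_neg_of_neg_of_pos
    · norm_num
    · positivity
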